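/- Let N ≥ 2 be even and let p be a design on N units whose support consists only of assignments w with Σ_i w_i = N/2, and write π_{ij} = Pr(W_i = 1, W_j = 1). Then for every vector v ∈ {0,1}^N with Σ_i v_i = N/2, E[((2/N)·(Σ_{i : v_i = 1} W_i − Σ_{i : v_i = 0} W_i))²] = (16/N²)·Σ_{i<j : v_i = v_j} (π_{ij} − (N−2)/(4(N−1))) + 1/(N−1). In particular, for the completely randomized design with equal group sizes one has π_{ij} = (N−2)/(4(N−1)) for all i ≠ j, and the left-hand side equals 1/(N−1). -/
import Mathlib


open Finset

noncomputable section

/-- Expectation under the design. -/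
def expct (N : ℕ) (p f : (Fin N → Bool) → ℝ) : ℝ :=
  ∑ w : Fin N → Bool, p w * f w

/-- The treated set `T(w)`. -/
def Tset (N : ℕ) (w : Fin N → Bool) : Finset (Fin N) :=
  univ.filter fun i => w i = true

/-- Pairwise treatment probability `π_{ij} = Pr(W_i = 1, W_j = 1)`. -/
def jointP11 (N : ℕ) (p : (Fin N → Bool) → ℝ) (i j : Fin N) : ℝ :=
  ∑ w : Fin N → Bool, if w i = true ∧ w j = true then p w else 0

/-- Completely randomized design with equal group sizes. -/
def crd (N : ℕ) (w : Fin N → Bool) : ℝ :=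
  if (Tset N w).card = N / 2 then (1 : ℝ) / (N.choose (N / 2)) else 0

/-- The contrast `(2/N)·(Σ_{i : v_i = 1} W_i − Σ_{i : v_i = 0} W_i)`. -/
def contrastW (N : ℕ) (v w : Fin N → Bool) : ℝ :=
  (2 / (N : ℝ)) * ((∑ i, if v i then (if w i then (1 : ℝ) else 0) else 0)
    - ∑ i, if v i then 0 else (if w i then (1 : ℝ) else 0))

namespace PPI
variable {N : ℕ}

def ind (w : Fin N → Bool) (i : Fin N) : ℝ := if w i then 1 else 0

lemma jointP11_eq (p : (Fin N → Bool) → ℝ) (i j : Fin N) :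
    jointP11 N p i j = ∑ w : Fin N → Bool, p w * (ind w i * ind w j) := by
  refine Finset.sum_congr rfl fun w _ => ?_
  unfold ind
  by_cases h1 : w i <;> by_cases h2 : w j <;> simp [h1, h2]

lemma jointP11_symm (p : (Fin N → Bool) → ℝ) (i j : Fin N) :
    jointP11 N p i j = jointP11 N p j i := by
  refine Finset.sum_congr rfl fun w _ => if_congr and_comm rfl rfl

lemma sum_ind (w : Fin N → Bool) : ∑ i, ind w i = ((Tset N w).card : ℝ) := by
  unfold ind Tset
  rw [Finset.card_filter]
  push_cast
  rfl

lemma sym_split (f : Fin N → Fin N → ℝ) (hf : ∀ i j, f i j = f j i) :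
    ∑ i, ∑ j, f i j =
      2 * (∑ i, ∑ j, if i < j then f i j else 0) + ∑ i, f i i := by
  have key : ∀ i j : Fin N, f i j =
      (if i < j then f i j else 0) + ((if j < i then f i j else 0)
        + (if i = j then f i j else 0)) := by
    intro i j
    rcases lt_trichotomy i j with h | h | h
    · simp [h, h.ne, asymm h]
    · simp [h, lt_irrefl]
    · simp [h, h.ne', asymm h]
  have h1 : ∑ i, ∑ j, (if (i:Fin N) = j then f i j else 0) = ∑ i, f i i := by
    refine Finset.sum_congr rfl fun i _ => ?_
    rw [Finset.sum_ite_eq]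
    simp
  have h2 : (∑ i, ∑ j, if (j:Fin N) < i then f i j else 0)
      = ∑ i, ∑ j, if i < j then f i j else 0 := by
    rw [Finset.sum_comm]
    refine Finset.sum_congr rfl fun i _ => Finset.sum_congr rfl fun j _ => ?_
    rw [hf]
  calc ∑ i, ∑ j, f i j
      = ∑ i, ∑ j, ((if i < j then f i j else 0) + ((if j < i then f i j else 0)
        + (if i = j then f i j else 0))) := by
        exact Finset.sum_congr rfl fun i _ => Finset.sum_congr rfl fun j _ => key i j
    _ = (∑ i, ∑ j, if i < j then f i j else 0) + ((∑ i, ∑ j, if j < i then f i j else 0)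
        + ∑ i, ∑ j, if i = j then f i j else 0) := by
        simp [Finset.sum_add_distrib]
    _ = _ := by rw [h1, h2]; ring

lemma sum_swap3 {α β γ : Type*} [Fintype α] [Fintype β] [Fintype γ] (f : α → β → γ → ℝ) :
    ∑ i : α, ∑ j : β, ∑ w : γ, f i j w = ∑ w : γ, ∑ i : α, ∑ j : β, f i j w := by
  calc ∑ i : α, ∑ j : β, ∑ w : γ, f i j w
      = ∑ i : α, ∑ w : γ, ∑ j : β, f i j w :=
        Finset.sum_congr rfl fun i _ => Finset.sum_comm
    _ = _ := Finset.sum_comm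

end PPI

open PPI

/-- Proposition 5 (key identity): for designs with equal group sizes,
`E[((2/N)(Σ_{v_i=1} W_i − Σ_{v_i=0} W_i))²]
  = (16/N²)·Σ_{i<j : v_i=v_j} (π_{ij} − (N−2)/(4(N−1))) + 1/(N−1)`;
in particular, under the CRD, `π_{ij} = (N−2)/(4(N−1))` for `i ≠ j` and the
left-hand side equals `1/(N−1)`. -/
theorem pairwise_probability_identity
    (N : ℕ) (hN : 2 ≤ N) (hEven : 2 ∣ N)
    (p : (Fin N → Bool) → ℝ) (hp : ∀ w, 0 ≤ p w)
    (hsum : ∑ w : Fin N → Bool, p w = 1)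
    (hsupp : ∀ w, 0 < p w → (Tset N w).card = N / 2)
    (v : Fin N → Bool) (hv : (Tset N v).card = N / 2) :
    expct N p (fun w => (contrastW N v w) ^ 2) =
        (16 / (N : ℝ) ^ 2) *
          (∑ i, ∑ j, if i < j ∧ v i = v j then
              jointP11 N p i j - ((N : ℝ) - 2) / (4 * ((N : ℝ) - 1)) else 0)
          + 1 / ((N : ℝ) - 1) ∧
      ((∀ w, p w = crd N w) →
        (∀ i j : Fin N, i ≠ j →
            jointP11 N p i j = ((N : ℝ) - 2) / (4 * ((N : ℝ) - 1))) ∧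
          expct N p (fun w => (contrastW N v w) ^ 2) = 1 / ((N : ℝ) - 1)) := by
  obtain ⟨k, rfl⟩ := hEven
  have hk1 : 1 ≤ k := by omega
  have hk2 : 2 * k / 2 = k := by omega
  rw [hk2] at hv hsupp
  have hkR : (k:ℝ) ≠ 0 := Nat.cast_ne_zero.mpr (by omega)
  have hkR1 : (1:ℝ) ≤ (k:ℝ) := by exact_mod_cast hk1
  have h2k1 : 2*(k:ℝ) - 1 ≠ 0 := by nlinarith
  set a : Fin (2*k) → ℝ := fun i => if v i then 1 else -1 with ha
  -- diagonal moment
  have hcard1 : ∀ w : Fin (2*k) → Bool, p w * ((Tset (2*k) w).card : ℝ) = p w * k := by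
    intro w
    rcases (hp w).eq_or_lt with h | h
    · rw [← h, zero_mul, zero_mul]
    · rw [hsupp w h]
  have hcard2 : ∀ w : Fin (2*k) → Bool,
      p w * ((Tset (2*k) w).card : ℝ)^2 = p w * (k:ℝ)^2 := by
    intro w
    rcases (hp w).eq_or_lt with h | h
    · rw [← h, zero_mul, zero_mul]
    · rw [hsupp w h]
  have hA : ∑ i, jointP11 (2*k) p i i = (k:ℝ) := by
    have e1 : ∀ i : Fin (2*k), jointP11 (2*k) p i i
        = ∑ w : Fin (2*k) → Bool, p w * ind w i := by
      intro i
      rw [jointP11_eq]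
      refine Finset.sum_congr rfl fun w _ => ?_
      unfold ind
      by_cases h : w i <;> simp [h]
    calc ∑ i, jointP11 (2*k) p i i
        = ∑ i, ∑ w : Fin (2*k) → Bool, p w * ind w i :=
          Finset.sum_congr rfl fun i _ => e1 i
      _ = ∑ w : Fin (2*k) → Bool, ∑ i, p w * ind w i := Finset.sum_comm
      _ = ∑ w : Fin (2*k) → Bool, p w * ((Tset (2*k) w).card : ℝ) := by
          refine Finset.sum_congr rfl fun w _ => ?_
          rw [← Finset.mul_sum, sum_ind]
      _ = ∑ w : Fin (2*k) → Bool, p w * k :=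
          Finset.sum_congr rfl fun w _ => hcard1 w
      _ = (k:ℝ) := by rw [← Finset.sum_mul, hsum, one_mul]
  have hB : ∑ i, ∑ j, jointP11 (2*k) p i j = (k:ℝ)^2 := by
    calc ∑ i, ∑ j, jointP11 (2*k) p i j
        = ∑ i, ∑ j, ∑ w : Fin (2*k) → Bool, p w * (ind w i * ind w j) :=
          Finset.sum_congr rfl fun i _ => Finset.sum_congr rfl fun j _ => jointP11_eq p i j
      _ = ∑ w : Fin (2*k) → Bool, ∑ i, ∑ j, p w * (ind w i * ind w j) := sum_swap3 _
      _ = ∑ w : Fin (2*k) → Bool, p w * ((Tset (2*k) w).card : ℝ)^2 := by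
          refine Finset.sum_congr rfl fun w _ => ?_
          rw [← sum_ind (N := 2*k) w, sq, Finset.sum_mul_sum, Finset.mul_sum]
          exact Finset.sum_congr rfl fun i _ => by rw [Finset.mul_sum]
      _ = ∑ w : Fin (2*k) → Bool, p w * (k:ℝ)^2 :=
          Finset.sum_congr rfl fun w _ => hcard2 w
      _ = (k:ℝ)^2 := by rw [← Finset.sum_mul, hsum, one_mul]
  -- contrast as a signed sum
  have hcon : ∀ w : Fin (2*k) → Bool,
      contrastW (2*k) v w = (2/((2*k:ℕ):ℝ)) * ∑ i, a i * ind w i := by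
    intro w
    unfold contrastW
    rw [← Finset.sum_sub_distrib]
    congr 1
    refine Finset.sum_congr rfl fun i _ => ?_
    by_cases h : v i <;> by_cases h2 : w i <;> simp [ha, h, h2, ind]
  -- expectation as quadratic form
  have hE : expct (2*k) p (fun w => (contrastW (2*k) v w) ^ 2)
      = (4/((2*k:ℕ):ℝ)^2) * ∑ i, ∑ j, a i * a j * jointP11 (2*k) p i j := by
    have step : ∑ i, ∑ j, a i * a j * jointP11 (2*k) p i j
        = ∑ w : Fin (2*k) → Bool, p w * (∑ i, a i * ind w i)^2 := by
      calc ∑ i, ∑ j, a i * a j * jointP11 (2*k) p i j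
          = ∑ i, ∑ j, ∑ w : Fin (2*k) → Bool,
              p w * ((a i * ind w i) * (a j * ind w j)) := by
            refine Finset.sum_congr rfl fun i _ => Finset.sum_congr rfl fun j _ => ?_
            rw [jointP11_eq, Finset.mul_sum]
            exact Finset.sum_congr rfl fun w _ => by ring
        _ = ∑ w : Fin (2*k) → Bool, ∑ i, ∑ j,
              p w * ((a i * ind w i) * (a j * ind w j)) := sum_swap3 _
        _ = ∑ w : Fin (2*k) → Bool, p w * (∑ i, a i * ind w i)^2 := by
            refine Finset.sum_congr rfl fun w _ => ?_
            rw [sq, Finset.sum_mul_sum, Finset.mul_sum]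
            exact Finset.sum_congr rfl fun i _ => by rw [Finset.mul_sum]
    rw [step]
    unfold expct
    rw [Finset.mul_sum]
    refine Finset.sum_congr rfl fun w _ => ?_
    simp only [hcon]
    ring
  -- cardinalities
  have hT : (univ.filter fun j : Fin (2*k) => v j = true).card = k := hv
  have hF : (univ.filter fun j : Fin (2*k) => ¬(v j = true)).card = k := by
    have h := Finset.card_filter_add_card_filter_not
      (s := (univ : Finset (Fin (2*k)))) (p := fun j => v j = true)
    rw [Finset.card_univ] at h
    simp only [Fintype.card_fin] at h
    omega
  have hrow : ∀ i : Fin (2*k), ∑ j, (if v i = v j then (1:ℝ) else 0) = (k:ℝ) := by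
    intro i
    rw [Finset.sum_boole]
    cases hvi : v i
    · have he : (univ.filter fun j : Fin (2*k) => (false:Bool) = v j)
          = univ.filter fun j : Fin (2*k) => ¬(v j = true) := by
        refine Finset.filter_congr fun j _ => ?_
        cases h : v j <;> simp [h]
      rw [he, hF]
    · have he : (univ.filter fun j : Fin (2*k) => (true:Bool) = v j)
          = univ.filter fun j : Fin (2*k) => v j = true := by
        refine Finset.filter_congr fun j _ => ?_
        cases h : v j <;> simp [h]
      rw [he, hT]
  have hC : ∑ i, ∑ j, (if v i = v j then (1:ℝ) else 0) = 2*(k:ℝ)^2 := by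
    rw [Finset.sum_congr rfl fun i _ => hrow i, Finset.sum_const, Finset.card_univ]
    simp only [Fintype.card_fin, nsmul_eq_mul]
    push_cast
    ring
  set S : ℝ := ∑ i, ∑ j, (if i < j ∧ v i = v j then jointP11 (2*k) p i j else 0) with hS
  set M : ℝ := ∑ i, ∑ j, (if i < j ∧ v i = v j then (1:ℝ) else 0) with hM
  have hT2 : ∑ i, ∑ j, (if v i = v j then jointP11 (2*k) p i j else 0)
      = 2*S + (k:ℝ) := by
    rw [sym_split (f := fun i j => if v i = v j then jointP11 (2*k) p i j else 0)
      (fun i j => if_congr eq_comm (jointP11_symm p i j) rfl)]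
    simp only [← ite_and, eq_self_iff_true, if_true]
    rw [hA, ← hS]
  have hM2 : M = (k:ℝ)^2 - k := by
    have h := sym_split (f := fun i j : Fin (2*k) => if v i = v j then (1:ℝ) else 0)
      (fun i j => if_congr eq_comm rfl rfl)
    rw [hC] at h
    simp only [← ite_and, eq_self_iff_true, if_true] at h
    rw [← hM] at h
    have hdiag : ∑ _i : Fin (2*k), (1:ℝ) = 2*(k:ℝ) := by
      rw [Finset.sum_const, Finset.card_univ]
      simp only [Fintype.card_fin, nsmul_eq_mul]
      push_cast; ring
    rw [hdiag] at h
    linarith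
  have hQ : ∑ i, ∑ j, a i * a j * jointP11 (2*k) p i j
      = 2*(2*S + (k:ℝ)) - (k:ℝ)^2 := by
    have e1 : ∀ i j : Fin (2*k), a i * a j * jointP11 (2*k) p i j
        = 2*(if v i = v j then jointP11 (2*k) p i j else 0) - jointP11 (2*k) p i j := by
      intro i j
      by_cases h1 : v i <;> by_cases h2 : v j <;> simp [ha, h1, h2] <;> ring
    calc ∑ i, ∑ j, a i * a j * jointP11 (2*k) p i j
        = ∑ i, ∑ j, (2*(if v i = v j then jointP11 (2*k) p i j else 0)
            - jointP11 (2*k) p i j) := by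
          exact Finset.sum_congr rfl fun i _ => Finset.sum_congr rfl fun j _ => e1 i j
      _ = 2*(∑ i, ∑ j, (if v i = v j then jointP11 (2*k) p i j else 0))
            - ∑ i, ∑ j, jointP11 (2*k) p i j := by
          simp [Finset.sum_sub_distrib, Finset.mul_sum]
      _ = 2*(2*S + (k:ℝ)) - (k:ℝ)^2 := by rw [hT2, hB]
  have hRHS : ∑ i, ∑ j, (if i < j ∧ v i = v j then
        jointP11 (2*k) p i j - (((2*k:ℕ):ℝ) - 2) / (4 * (((2*k:ℕ):ℝ) - 1)) else 0)
      = S - (((2*k:ℕ):ℝ) - 2) / (4 * (((2*k:ℕ):ℝ) - 1)) * M := by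
    rw [hS, hM, Finset.mul_sum, ← Finset.sum_sub_distrib]
    refine Finset.sum_congr rfl fun i _ => ?_
    rw [Finset.mul_sum, ← Finset.sum_sub_distrib]
    refine Finset.sum_congr rfl fun j _ => ?_
    split_ifs <;> ring
  have part1 : expct (2*k) p (fun w => (contrastW (2*k) v w) ^ 2) =
      (16 / ((2*k:ℕ) : ℝ) ^ 2) *
        (∑ i, ∑ j, if i < j ∧ v i = v j then
            jointP11 (2*k) p i j - (((2*k:ℕ) : ℝ) - 2) / (4 * (((2*k:ℕ) : ℝ) - 1)) else 0)
        + 1 / (((2*k:ℕ) : ℝ) - 1) := by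
    rw [hE, hQ, hRHS, hM2]
    push_cast
    field_simp
    ring
  refine ⟨part1, fun hcrd => ?_⟩
  -- invariance of crd under permutations
  have hinv : ∀ (σ : Equiv.Perm (Fin (2*k))) (w : Fin (2*k) → Bool),
      crd (2*k) (w ∘ σ) = crd (2*k) w := by
    intro σ w
    unfold crd Tset
    have hc : (univ.filter fun i => (w ∘ σ) i = true).card
        = (univ.filter fun i => w i = true).card := by
      rw [Finset.card_filter, Finset.card_filter]
      exact Fintype.sum_equiv σ _ _ (fun x => rfl)
    rw [hc]
  -- all off-diagonal joint probabilities are equal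
  have hpair : ∀ i j i' j' : Fin (2*k), i ≠ j → i' ≠ j' →
      jointP11 (2*k) p i j = jointP11 (2*k) p i' j' := by
    intro i j i' j' hij hij'
    set τ : Equiv.Perm (Fin (2*k)) := Equiv.swap i' i with hτ
    set σ : Equiv.Perm (Fin (2*k)) := τ.trans (Equiv.swap (τ j') j) with hσ
    have hτi : τ i' = i := Equiv.swap_apply_left i' i
    have hne1 : τ j' ≠ i := by
      intro h
      exact hij' (τ.injective (by rw [h, hτi])).symm
    have hσ1 : σ i' = i := by
      rw [hσ, Equiv.trans_apply, hτi]
      exact Equiv.swap_apply_of_ne_of_ne (Ne.symm hne1) hij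
    have hσ2 : σ j' = j := by
      rw [hσ, Equiv.trans_apply]
      exact Equiv.swap_apply_left (τ j') j
    have hpc : p = crd (2*k) := funext hcrd
    rw [hpc]
    unfold jointP11
    refine Fintype.sum_equiv
      ⟨fun w => w ∘ σ, fun w => w ∘ σ.symm,
        fun w => funext fun x => by simp,
        fun w => funext fun x => by simp⟩ _ _ (fun w => ?_)
    simp only [Equiv.coe_fn_mk, Function.comp_apply]
    rw [hσ1, hσ2, hinv σ w]
  -- the common value
  have hpival : ∀ i j : Fin (2*k), i ≠ j →
      jointP11 (2*k) p i j = (((2*k:ℕ):ℝ) - 2) / (4 * (((2*k:ℕ):ℝ) - 1)) := by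
    intro i j hij
    have hoff : ∑ i', ∑ j', (if i' ≠ j' then jointP11 (2*k) p i' j' else 0)
        = (k:ℝ)^2 - k := by
      have hsplit : ∑ i', ∑ j', jointP11 (2*k) p i' j'
          = (∑ i', ∑ j', (if i' ≠ j' then jointP11 (2*k) p i' j' else 0))
            + ∑ i', jointP11 (2*k) p i' i' := by
        rw [← Finset.sum_add_distrib]
        refine Finset.sum_congr rfl fun i' _ => ?_
        have : ∑ j', (if i' = j' then jointP11 (2*k) p i' j' else 0)
            = jointP11 (2*k) p i' i' := by
          rw [Finset.sum_ite_eq]; simp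
        rw [← this, ← Finset.sum_add_distrib]
        refine Finset.sum_congr rfl fun j' _ => ?_
        by_cases h : i' = j' <;> simp [h]
      rw [hB, hA] at hsplit
      linarith
    have hconst : ∑ i', ∑ j', (if i' ≠ j' then jointP11 (2*k) p i' j' else 0)
        = (2*(k:ℝ)) * (2*(k:ℝ) - 1) * jointP11 (2*k) p i j := by
      have e1 : ∀ i' j' : Fin (2*k), (if i' ≠ j' then jointP11 (2*k) p i' j' else 0)
          = (if i' ≠ j' then jointP11 (2*k) p i j else 0) := by
        intro i' j'
        by_cases h : i' = j'
        · simp [h]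
        · rw [if_pos h, if_pos h]
          exact hpair i' j' i j h hij
      have e2 : ∀ i' : Fin (2*k), ∑ j', (if i' ≠ j' then jointP11 (2*k) p i j else 0)
          = (2*(k:ℝ) - 1) * jointP11 (2*k) p i j := by
        intro i'
        have e3 : ∀ j' : Fin (2*k), (if i' ≠ j' then jointP11 (2*k) p i j else 0)
            = jointP11 (2*k) p i j - (if i' = j' then jointP11 (2*k) p i j else 0) := by
          intro j'
          by_cases h : i' = j' <;> simp [h]
        rw [Finset.sum_congr rfl fun j' _ => e3 j', Finset.sum_sub_distrib,
          Finset.sum_ite_eq, Finset.sum_const, Finset.card_univ]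
        simp only [Fintype.card_fin, nsmul_eq_mul, mem_univ, if_true]
        push_cast
        ring
      rw [Finset.sum_congr rfl fun i' _ => Finset.sum_congr rfl fun j' _ => e1 i' j',
        Finset.sum_congr rfl fun i' _ => e2 i', Finset.sum_const, Finset.card_univ]
      simp only [Fintype.card_fin, nsmul_eq_mul]
      push_cast
      ring
    have hval : (2*(k:ℝ)) * (2*(k:ℝ) - 1) * jointP11 (2*k) p i j = (k:ℝ)^2 - k := by
      rw [← hconst, hoff]
    push_cast
    rw [eq_div_iff (by intro h; apply h2k1; linarith)]
    nlinarith [hval]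
  refine ⟨fun i j hij => hpival i j hij, ?_⟩
  have hzero : ∑ i, ∑ j, (if i < j ∧ v i = v j then
      jointP11 (2*k) p i j - (((2*k:ℕ):ℝ) - 2) / (4 * (((2*k:ℕ):ℝ) - 1)) else 0) = 0 := by
    refine Finset.sum_eq_zero fun i _ => Finset.sum_eq_zero fun j _ => ?_
    split_ifs with h
    · rw [hpival i j (ne_of_lt h.1)]
      ring
    · rfl
  rw [part1, hzero, mul_zero, zero_add]
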